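/- Fix integers n ≥ 1 and N ≥ n+2, and let K ⊂ ℝⁿ be a convex body containing the origin in its interior. Then G_{n,N}(𝟙_K) = min over polytopes P ⊆ K with at most N vertices of vol_n(K \ P), where 𝟙_K is the characteristic function of K. -/

import Mathlib

open MeasureTheory Filter Set Metric

noncomputable section

/-- `n`-dimensional Euclidean space `ℝⁿ`. -/
abbrev Eucl (n : ℕ) : Type := EuclideanSpace ℝ (Fin n)

/-- The epigraph `epi(ψ) = {(x,t) : t ≥ ψ(x)}` of an extended-real-valued function. -/
def epi {n : ℕ} (ψ : Eucl n → EReal) : Set (Eucl n × ℝ) :=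
  {q : Eucl n × ℝ | ψ q.1 ≤ (q.2 : EReal)}

/-- `expNeg t = exp (−t)`, extended so that `exp (−(+∞)) = 0`
(the value at `⊥` is irrelevant: functions in `ℝ ∪ {+∞}` never take the value `⊥`). -/
def expNeg (t : EReal) : ℝ :=
  if t = ⊤ ∨ t = ⊥ then 0 else Real.exp (-t.toReal)

/-- `negLog y = − log y` for `y > 0`, and `+∞` otherwise; for `f = exp(−ψ) ≥ 0`
this recovers `ψ` from `f`. -/
def negLog (y : ℝ) : EReal :=
  if y ≤ 0 then ⊤ else ((-Real.log y : ℝ) : EReal)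

/-- Membership in the class `LC_c(ℝⁿ)`: `f = exp(−ψ)` for a convex (as a function into
`ℝ ∪ {+∞}`, encoded by convexity of the epigraph) lower semicontinuous coercive function `ψ`,
`ψ ≢ +∞`, the origin lies in `dom ψ`, and `dom ψ` is not contained in a hyperplane
(its affine span is everything). -/
def MemLCc {n : ℕ} (f : Eucl n → ℝ) : Prop :=
  ∃ ψ : Eucl n → EReal,
    (∀ x, ψ x ≠ ⊥) ∧
    Convex ℝ (epi ψ) ∧
    LowerSemicontinuous ψ ∧
    Tendsto ψ (cocompact (Eucl n)) (nhds ⊤) ∧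
    (∃ x, ψ x ≠ ⊤) ∧
    ψ 0 ≠ ⊤ ∧
    affineSpan ℝ {x : Eucl n | ψ x ≠ ⊤} = ⊤ ∧
    (∀ x, f x = expNeg (ψ x))

/-- The union of the vertical (upward) rays `{(xᵢ,t) : t ≥ tᵢ}`. -/
def verticalRays {n k : ℕ} (x : Fin k → Eucl n) (t : Fin k → ℝ) : Set (Eucl n × ℝ) :=
  ⋃ i, {q : Eucl n × ℝ | q.1 = x i ∧ t i ≤ q.2}

/-- `p` is the inner linearization of `ψ` built from `k` points `(xᵢ,tᵢ)` of `epi ψ`: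
its epigraph is the convex hull of the union of the vertical rays with those endpoints
(so `p = +∞` outside `conv{x₁,…,x_k}`). -/
def IsInnerLinearization {n : ℕ} (ψ : Eucl n → EReal) (k : ℕ) (p : Eucl n → EReal) : Prop :=
  ∃ (x : Fin k → Eucl n) (t : Fin k → ℝ),
    (∀ i, ψ (x i) ≤ ((t i : ℝ) : EReal)) ∧
    epi p = convexHull ℝ (verticalRays x t)

/-- `𝒫_N(f)`: the set of log affine minorants `exp(−p)` of `f = exp(−ψ)` built from
`k ≤ N` points of `epi ψ` (at most `N` break points). -/
def PN {n : ℕ} (N : ℕ) (f : Eucl n → ℝ) : Set (Eucl n → ℝ) :=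
  {q : Eucl n → ℝ | ∃ k : ℕ, 1 ≤ k ∧ k ≤ N ∧ ∃ p : Eucl n → EReal,
    IsInnerLinearization (fun x => negLog (f x)) k p ∧ ∀ x, q x = expNeg (p x)}

/-- The total mass `J(f) = ∫ f`. -/
def totalMass {n : ℕ} (f : Eucl n → ℝ) : ℝ := ∫ x, f x

/-- `G_{n,N}(f) = min_{p ∈ 𝒫_N(f)} (J(f) − J(p))`. -/
def Gfun {n : ℕ} (N : ℕ) (f : Eucl n → ℝ) : ℝ :=
  sInf {d : ℝ | ∃ q ∈ PN N f, d = totalMass f - totalMass q}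

/-- `g` is the symmetric decreasing rearrangement of `f`: for every `t > 0` the superlevel set
`{g ≥ t}` is the closed Euclidean ball centered at the origin (possibly degenerate or empty)
with the same Lebesgue measure as `{f ≥ t}`. -/
def IsSDR {n : ℕ} (f g : Eucl n → ℝ) : Prop :=
  ∀ t : ℝ, 0 < t →
    ({x : Eucl n | t ≤ g x} = ∅ ∨
      ∃ r : ℝ, 0 ≤ r ∧ {x : Eucl n | t ≤ g x} = closedBall (0 : Eucl n) r) ∧
    volume {x : Eucl n | t ≤ g x} = volume {x : Eucl n | t ≤ f x}

/-- `𝒞_N^in(K)`: polytopes with at most `N` vertices contained in `K`. -/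
def PolyIn {n : ℕ} (N : ℕ) (K : Set (Eucl n)) : Set (Set (Eucl n)) :=
  {P : Set (Eucl n) |
    (∃ S : Finset (Eucl n), S.card ≤ N ∧ P = convexHull ℝ (S : Set (Eucl n))) ∧ P ⊆ K}

/-!
For `f = 𝟙_K` the points of `epi (−log f)` are the `(x, t)` with `x ∈ K` and `t ≥ 0`. Hence the
epigraph of an inner linearization built on `x₁, …, x_k ∈ K` lies in `conv{xᵢ} × [0, ∞)`, so its
log affine minorant is at most `𝟙_{conv{xᵢ}}`; and with all `tᵢ = 0` it is exactly `𝟙_{conv{xᵢ}}`.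
So every value `J(𝟙_K) − J(q)` is bounded below by some `vol(K \ P)` and conversely (the empty
polytope is handled by a one-point polytope inside `K`), and the two infima agree.
-/

section

variable {n : ℕ}

lemma expNeg_nonneg (t : EReal) : 0 ≤ expNeg t := by
  unfold expNeg
  split_ifs <;> positivity

lemma negLog_indicator_one_le_coe_iff {E : Type*} {K : Set E} {x : E} {t : ℝ} :
    negLog (K.indicator (fun _ => (1 : ℝ)) x) ≤ t ↔ x ∈ K ∧ 0 ≤ t := by
  by_cases hx : x ∈ K <;> norm_num [negLog, hx]

lemma verticalRays_subset_prod {k : ℕ} (x : Fin k → Eucl n) {t : Fin k → ℝ} {c : ℝ}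
    (ht : ∀ i, c ≤ t i) : verticalRays x t ⊆ range x ×ˢ Ici c := by
  rintro ⟨y, s⟩ hys
  obtain ⟨i, rfl, hs⟩ := mem_iUnion.1 hys
  exact ⟨mem_range_self i, (ht i).trans hs⟩

lemma verticalRays_const {k : ℕ} (x : Fin k → Eucl n) (c : ℝ) :
    verticalRays x (fun _ => c) = range x ×ˢ Ici c := by
  refine (verticalRays_subset_prod x fun _ => le_rfl).antisymm ?_
  rintro ⟨y, s⟩ ⟨⟨i, rfl⟩, hs⟩
  exact mem_iUnion.2 ⟨i, rfl, hs⟩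

lemma convexHull_prod_Ici {E : Type*} [AddCommGroup E] [Module ℝ E] (s : Set E) (c : ℝ) :
    convexHull ℝ (s ×ˢ Ici c) = convexHull ℝ s ×ˢ Ici c := by
  rw [convexHull_prod, (convex_Ici c).convexHull_eq]

lemma epi_indicator_compl_top (P : Set (Eucl n)) :
    epi (Pᶜ.indicator fun _ => ⊤) = P ×ˢ Ici 0 := by
  ext ⟨y, s⟩
  by_cases hy : y ∈ P <;> simp [epi, hy]

lemma expNeg_indicator_compl_top {E : Type*} (P : Set E) (y : E) :
    expNeg (Pᶜ.indicator (fun _ => ⊤) y) = P.indicator (fun _ => (1 : ℝ)) y := by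
  by_cases hy : y ∈ P <;> simp [expNeg, hy]

lemma expNeg_le_indicator_of_epi_subset {p : Eucl n → EReal} {P : Set (Eucl n)}
    (h : epi p ⊆ P ×ˢ Ici 0) (y : Eucl n) : expNeg (p y) ≤ P.indicator (fun _ => 1) y := by
  unfold expNeg
  split_ifs with hy
  · exact indicator_nonneg (fun _ _ => zero_le_one) y
  · push Not at hy
    have hmem : (y, (p y).toReal) ∈ epi p := (EReal.coe_toReal hy.1 hy.2).ge
    obtain ⟨hyP, hpy⟩ := h hmem
    rw [indicator_of_mem hyP, Real.exp_le_one_iff, neg_nonpos]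
    exact hpy

lemma totalMass_indicator_one {s : Set (Eucl n)} (hs : MeasurableSet s) :
    totalMass (s.indicator fun _ => (1 : ℝ)) = volume.real s :=
  integral_indicator_one hs

lemma totalMass_le_of_le_indicator {q : Eucl n → ℝ} {P : Set (Eucl n)}
    (hP : MeasurableSet P) (hPfin : volume P ≠ ⊤) (hq0 : ∀ y, 0 ≤ q y)
    (hqP : ∀ y, q y ≤ P.indicator (fun _ => 1) y) : totalMass q ≤ volume.real P := by
  rw [← totalMass_indicator_one hP]
  exact integral_mono_of_nonneg (.of_forall hq0)
    ((integrable_indicator_iff hP).2 (integrableOn_const hPfin)) (.of_forall hqP)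

lemma isCompact_of_mem_polyIn {N : ℕ} {K P : Set (Eucl n)} (hP : P ∈ PolyIn N K) :
    IsCompact P := by
  obtain ⟨⟨S, -, rfl⟩, -⟩ := hP
  exact S.finite_toSet.isCompact_convexHull ℝ

lemma indicator_convexHull_mem_PN {N : ℕ} {K : Set (Eucl n)} {S : Finset (Eucl n)}
    (hS : S.Nonempty) (hSN : S.card ≤ N) (hSK : (S : Set (Eucl n)) ⊆ K) :
    (convexHull ℝ (S : Set (Eucl n))).indicator (fun _ => 1) ∈
      PN N (K.indicator fun _ => (1 : ℝ)) := by
  set x : Fin S.card → Eucl n := fun i => S.equivFin.symm i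
  have hx : range x = S := by
    rw [show x = Subtype.val ∘ S.equivFin.symm from rfl, S.equivFin.symm.surjective.range_comp]
    simp
  refine ⟨S.card, hS.card_pos, hSN, (convexHull ℝ (S : Set (Eucl n)))ᶜ.indicator fun _ => ⊤,
    ⟨x, fun _ => 0, fun i => ?_, ?_⟩, fun y => (expNeg_indicator_compl_top _ y).symm⟩
  · exact negLog_indicator_one_le_coe_iff.2 ⟨hSK (hx ▸ mem_range_self i), le_rfl⟩
  · rw [epi_indicator_compl_top, verticalRays_const, convexHull_prod_Ici, hx]

lemma exists_mem_polyIn_totalMass_le_of_mem_PN {N : ℕ} {K : Set (Eucl n)}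
    (hK : Convex ℝ K) {q : Eucl n → ℝ} (hq : q ∈ PN N (K.indicator fun _ => (1 : ℝ))) :
    ∃ P ∈ PolyIn N K, totalMass q ≤ volume.real P := by
  classical
  obtain ⟨k, -, hkN, p, ⟨x, t, hxt, hepi⟩, hqp⟩ := hq
  have hxK (i : Fin k) : x i ∈ K ∧ 0 ≤ t i := negLog_indicator_one_le_coe_iff.1 (hxt i)
  set S : Finset (Eucl n) := Finset.univ.image x
  have hS : (S : Set (Eucl n)) = range x := by simp [S]
  have hP : convexHull ℝ (S : Set (Eucl n)) ∈ PolyIn N K :=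
    ⟨⟨S, Finset.card_image_le.trans (by simpa using hkN), rfl⟩,
      convexHull_min (hS ▸ range_subset_iff.2 fun i => (hxK i).1) hK⟩
  have hepiP : epi p ⊆ convexHull ℝ (S : Set (Eucl n)) ×ˢ Ici 0 := by
    rw [hepi, hS, ← convexHull_prod_Ici]
    exact convexHull_mono (verticalRays_subset_prod x fun i => (hxK i).2)
  have hPc := isCompact_of_mem_polyIn hP
  refine ⟨_, hP, totalMass_le_of_le_indicator hPc.isClosed.measurableSet hPc.measure_lt_top.ne
    (fun y => hqp y ▸ expNeg_nonneg _) (fun y => ?_)⟩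
  rw [hqp y]
  exact expNeg_le_indicator_of_epi_subset hepiP y

lemma exists_nonempty_finset_superset_of_mem_polyIn {N : ℕ} {K : Set (Eucl n)} {z : Eucl n}
    (hz : z ∈ K) (hN : 1 ≤ N) {P : Set (Eucl n)} (hP : P ∈ PolyIn N K) :
    ∃ S : Finset (Eucl n), S.Nonempty ∧ S.card ≤ N ∧
      convexHull ℝ (S : Set (Eucl n)) ⊆ K ∧ P ⊆ convexHull ℝ (S : Set (Eucl n)) := by
  obtain ⟨⟨S, hSN, rfl⟩, hPK⟩ := hP
  rcases S.eq_empty_or_nonempty with rfl | hS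
  · exact ⟨{z}, Finset.singleton_nonempty z, hN, by simpa using hz, by simp⟩
  · exact ⟨S, hS, hSN, hPK, subset_rfl⟩

end

theorem Gfun_indicator_eq_polytope_approx_general
    (n N : ℕ) (hN : n + 2 ≤ N)
    (K : Set (Eucl n)) (hKc : IsCompact K) (hKconv : Convex ℝ K)
    (hKo : (0 : Eucl n) ∈ interior K) :
    Gfun N (K.indicator fun _ => (1 : ℝ)) =
      sInf ((fun P => (volume (K \ P)).toReal) '' PolyIn N K) := by
  have hKfin : volume K ≠ ⊤ := hKc.measure_lt_top.ne
  have hgap {P : Set (Eucl n)} (hP : P ∈ PolyIn N K) :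
      volume.real (K \ P) = volume.real K - volume.real P :=
    measureReal_sdiff hP.2 (isCompact_of_mem_polyIn hP).isClosed.measurableSet hKfin
  rw [Gfun, totalMass_indicator_one hKc.isClosed.measurableSet]
  simp_rw [← measureReal_def]
  apply csInf_eq_csInf_of_forall_exists_le
  · rintro _ ⟨q, hq, rfl⟩
    obtain ⟨P, hP, hqP⟩ := exists_mem_polyIn_totalMass_le_of_mem_PN hKconv hq
    exact ⟨_, ⟨P, hP, rfl⟩, by linarith [hgap hP]⟩
  · rintro _ ⟨P, hP, rfl⟩
    obtain ⟨S, hS, hSN, hSK, hPS⟩ :=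
      exists_nonempty_finset_superset_of_mem_polyIn (interior_subset hKo) (by omega) hP
    have hSP : convexHull ℝ (S : Set (Eucl n)) ∈ PolyIn N K := ⟨⟨S, hSN, rfl⟩, hSK⟩
    refine ⟨_, ⟨_, indicator_convexHull_mem_PN hS hSN ((subset_convexHull ℝ _).trans hSK), rfl⟩,
      ?_⟩
    rw [totalMass_indicator_one (isCompact_of_mem_polyIn hSP).isClosed.measurableSet,
      ← hgap hSP]
    exact measureReal_mono (sdiff_subset_sdiff_right hPS)
      (measure_ne_top_of_subset sdiff_subset hKfin)

/-- For a convex body `K ⊂ ℝⁿ` with `0 ∈ int K`,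
`G_{n,N}(𝟙_K) = min_{P ∈ 𝒞_N^in(K)} vol_n(K \ P)`. -/
theorem Gfun_indicator_eq_polytope_approx
    (n N : ℕ) (hn : 1 ≤ n) (hN : n + 2 ≤ N)
    (K : Set (Eucl n)) (hKc : IsCompact K) (hKconv : Convex ℝ K)
    (hKo : (0 : Eucl n) ∈ interior K) :
    Gfun N (K.indicator fun _ => (1 : ℝ)) =
      sInf ((fun P => (volume (K \ P)).toReal) '' PolyIn N K) :=
  Gfun_indicator_eq_polytope_approx_general n N hN K hKc hKconv hKo
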